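/- Shift invariance of the full propagator: if Δt ≥ 0 and either s_f + Δt < 0 or s_i > 0, then each term of the Dyson series for G(s_i, s_f) is invariant under the shift (s_i, s_f) ↦ (s_i + Δt, s_f + Δt); consequently G(s_i + Δt, s_f + Δt) = G(s_i, s_f). -/

import Mathlib

open MeasureTheory

/-- A perfect pairing of `{1,...,m}`. -/
def IsPairing {m : ℕ} (P : Finset (Fin m × Fin m)) : Prop :=
  (∀ p ∈ P, p.1 < p.2) ∧ ∀ x : Fin m, ∃! p, p ∈ P ∧ (x = p.1 ∨ x = p.2)

open scoped Classical in
/-- The set `Q(s_1,...,s_m)` of perfect pairings of indices. -/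
noncomputable def pairings (m : ℕ) : Finset (Finset (Fin m × Fin m)) :=
  Finset.univ.filter IsPairing

/-- The bath influence functional (Wick pairing sum). -/
noncomputable def Lb {m : ℕ} (B : ℝ → ℝ → ℂ) (s : Fin m → ℝ) : ℂ :=
  ∑ P ∈ pairings m, ∏ p ∈ P, B (s p.1) (s p.2)

/-- The bare system propagator `G_s^{(0)}(s_i,s_f)`. -/
noncomputable def Gs0 (Hs Os : Matrix (Fin 2) (Fin 2) ℂ) (si sf : ℝ) :
    Matrix (Fin 2) (Fin 2) ℂ :=
  if sf < 0 then NormedSpace.exp ((-Complex.I * ((sf : ℂ) - si)) • Hs)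
  else if 0 ≤ si then NormedSpace.exp ((-Complex.I * ((si : ℂ) - sf)) • Hs)
  else NormedSpace.exp ((Complex.I * sf) • Hs) * Os *
    NormedSpace.exp ((Complex.I * si) • Hs)

/-- `𝒰^{(0)}(lo, s_1,...,s_m, hi) = G_s^{(0)}(s_m,hi) W_s ⋯ W_s G_s^{(0)}(lo,s_1)`. -/
noncomputable def U0 (Hs Ws Os : Matrix (Fin 2) (Fin 2) ℂ) :
    List ℝ → ℝ → ℝ → Matrix (Fin 2) (Fin 2) ℂ
  | [], lo, hi => Gs0 Hs Os lo hi
  | x :: rest, lo, hi => U0 Hs Ws Os rest x hi * Ws * Gs0 Hs Os lo x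

/-- The ordered simplex `{a ≤ s_1 ≤ ... ≤ s_m ≤ b}`. -/
def simplexSet (m : ℕ) (a b : ℝ) : Set (Fin m → ℝ) :=
  {s | Monotone s ∧ ∀ i, a ≤ s i ∧ s i ≤ b}

/-- The number of negative components of `s`. -/
noncomputable def negCount {m : ℕ} (s : Fin m → ℝ) : ℕ :=
  (Finset.univ.filter fun i => s i < 0).card

/-- The `m`-th term of the Dyson series for the full propagator `G(s_i,s_f)`:
`i^m ∫_{s_i ≤ s ≤ s_f} (−1)^{#{s<0}} 𝒰^{(0)}(s_i,s,s_f) L_b(s) ds` (entrywise integral). -/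
noncomputable def dysonTerm (Hs Ws Os : Matrix (Fin 2) (Fin 2) ℂ) (B : ℝ → ℝ → ℂ)
    (m : ℕ) (si sf : ℝ) : Matrix (Fin 2) (Fin 2) ℂ :=
  Matrix.of fun a c =>
    ∫ s in simplexSet m si sf,
      Complex.I ^ m * (-1 : ℂ) ^ negCount s * Lb B s * (U0 Hs Ws Os (List.ofFn s) si sf) a c

open scoped Classical in
/-- The full propagator truncated at order `M`. -/
noncomputable def fullPropagator (Hs Ws Os : Matrix (Fin 2) (Fin 2) ℂ) (B : ℝ → ℝ → ℂ)
    (M : ℕ) (si sf : ℝ) : Matrix (Fin 2) (Fin 2) ℂ :=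
  Gs0 Hs Os si sf +
    ∑ m ∈ (Finset.range (M + 1)).filter (fun m => Even m ∧ 2 ≤ m),
      dysonTerm Hs Ws Os B m si sf

/-! If every time in `[s_i, s_f]` stays on the same side of `0` when shifted by `Δt`, the shift
changes neither the branch taken by `Gs0` nor the sign `(-1)^{#{s<0}}`, and on a fixed side both
`Gs0` and `B τ₁ τ₂ = F (|τ₁| - |τ₂|)` depend only on differences of times. So the integrand at
`s + Δt` equals the integrand at `s`, and translation invariance of Lebesgue measure on the
simplex gives equality of the Dyson terms. -/

def StaysOnOneSide (Δt : ℝ) (S : Set ℝ) : Prop :=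
  (∀ t ∈ S, t < 0 ∧ t + Δt < 0) ∨ ∀ t ∈ S, 0 ≤ t ∧ 0 ≤ t + Δt

namespace StaysOnOneSide

variable {Δt : ℝ} {S : Set ℝ}

theorem Icc_of_nonneg {a b : ℝ} (hΔt : 0 ≤ Δt) (h : b + Δt < 0 ∨ 0 < a) :
    StaysOnOneSide Δt (Set.Icc a b) := by
  rcases h with h | h
  · exact Or.inl fun t ht => ⟨by linarith [ht.2], by linarith [ht.2]⟩
  · exact Or.inr fun t ht => ⟨by linarith [ht.1], by linarith [ht.1]⟩

theorem add_neg_iff (hS : StaysOnOneSide Δt S) {t : ℝ} (ht : t ∈ S) : t + Δt < 0 ↔ t < 0 := by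
  rcases hS with h | h
  · exact iff_of_true (h t ht).2 (h t ht).1
  · exact iff_of_false (not_lt.2 (h t ht).2) (not_lt.2 (h t ht).1)

theorem abs_add_sub_abs_add (hS : StaysOnOneSide Δt S) {t u : ℝ} (ht : t ∈ S) (hu : u ∈ S) :
    |t + Δt| - |u + Δt| = |t| - |u| := by
  rcases hS with h | h
  · rw [abs_of_neg (h t ht).2, abs_of_neg (h u hu).2, abs_of_neg (h t ht).1,
      abs_of_neg (h u hu).1]
    ring
  · rw [abs_of_nonneg (h t ht).2, abs_of_nonneg (h u hu).2, abs_of_nonneg (h t ht).1,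
      abs_of_nonneg (h u hu).1]
    ring

end StaysOnOneSide

section Shift

variable (Hs Ws Os : Matrix (Fin 2) (Fin 2) ℂ) {Δt : ℝ} {S : Set ℝ}

theorem Gs0_add_add (hS : StaysOnOneSide Δt S) {a b : ℝ} (ha : a ∈ S) (hb : b ∈ S) :
    Gs0 Hs Os (a + Δt) (b + Δt) = Gs0 Hs Os a b := by
  have hba : ((b + Δt : ℝ) : ℂ) - ((a + Δt : ℝ) : ℂ) = b - a := by push_cast; ring
  have hab : ((a + Δt : ℝ) : ℂ) - ((b + Δt : ℝ) : ℂ) = a - b := by push_cast; ring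
  rcases hS with h | h
  · simp only [Gs0, if_pos (h b hb).1, if_pos (h b hb).2, hba]
  · simp only [Gs0, if_neg (not_lt.2 (h b hb).1), if_neg (not_lt.2 (h b hb).2),
      if_pos (h a ha).1, if_pos (h a ha).2, hab]

theorem U0_map_add (hS : StaysOnOneSide Δt S) {L : List ℝ} (hL : ∀ t ∈ L, t ∈ S) {lo hi : ℝ}
    (hlo : lo ∈ S) (hhi : hi ∈ S) :
    U0 Hs Ws Os (L.map (· + Δt)) (lo + Δt) (hi + Δt) = U0 Hs Ws Os L lo hi := by
  induction L generalizing lo with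
  | nil => exact Gs0_add_add Hs Os hS hlo hhi
  | cons x L ih =>
    have hx : x ∈ S := hL x List.mem_cons_self
    rw [List.map_cons, U0, U0, ih (fun t ht => hL t (List.mem_cons_of_mem x ht)) hx,
      Gs0_add_add Hs Os hS hlo hx]

end Shift

theorem negCount_add_const {m : ℕ} {Δt : ℝ} {S : Set ℝ} (hS : StaysOnOneSide Δt S)
    {s : Fin m → ℝ} (hs : ∀ i, s i ∈ S) :
    negCount (s + Function.const (Fin m) Δt) = negCount s := by
  unfold negCount
  congr 1
  exact Finset.filter_congr fun i _ => hS.add_neg_iff (hs i)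

theorem Lb_add_const {m : ℕ} (B : ℝ → ℝ → ℂ) {Δt : ℝ} {s : Fin m → ℝ}
    (hB : ∀ i j, B (s i + Δt) (s j + Δt) = B (s i) (s j)) :
    Lb B (s + Function.const (Fin m) Δt) = Lb B s := by
  simp only [Lb, Pi.add_apply, Function.const_apply, hB]

theorem isClosed_simplexSet (m : ℕ) (a b : ℝ) : IsClosed (simplexSet m a b) := by
  simp only [simplexSet, Set.ofPred_and, Set.ofPred_forall]
  exact isClosed_monotone.inter <| isClosed_iInter fun i =>
    (isClosed_le continuous_const (continuous_apply i)).inter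
      (isClosed_le (continuous_apply i) continuous_const)

theorem preimage_add_const_simplexSet (m : ℕ) (a b c : ℝ) :
    (· + Function.const (Fin m) c) ⁻¹' simplexSet m (a + c) (b + c) = simplexSet m a b := by
  ext s
  simp only [simplexSet, Set.mem_preimage, Set.mem_ofPred_eq, Monotone, Pi.add_apply,
    Function.const_apply, add_le_add_iff_right]

theorem dysonTerm_add_add (Hs Ws Os : Matrix (Fin 2) (Fin 2) ℂ) (B : ℝ → ℝ → ℂ) (m : ℕ)
    {Δt si sf : ℝ} (h : si ≤ sf) (hS : StaysOnOneSide Δt (Set.Icc si sf))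
    (hB : ∀ t ∈ Set.Icc si sf, ∀ u ∈ Set.Icc si sf, B (t + Δt) (u + Δt) = B t u) :
    dysonTerm Hs Ws Os B m (si + Δt) (sf + Δt) = dysonTerm Hs Ws Os B m si sf := by
  ext a c
  simp only [dysonTerm, Matrix.of_apply]
  rw [← (measurePreserving_add_right volume (Function.const (Fin m) Δt)).setIntegral_preimage_emb
    (measurableEmbedding_addRight _), preimage_add_const_simplexSet]
  refine setIntegral_congr_fun (isClosed_simplexSet m si sf).measurableSet fun s hs => ?_
  have hsS : ∀ i, s i ∈ Set.Icc si sf := hs.2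
  have hU : U0 Hs Ws Os (List.ofFn (s + Function.const (Fin m) Δt)) (si + Δt) (sf + Δt) =
      U0 Hs Ws Os (List.ofFn s) si sf := by
    have hofFn : List.ofFn (s + Function.const (Fin m) Δt) = (List.ofFn s).map (· + Δt) := by
      rw [List.map_ofFn]; rfl
    rw [hofFn]
    exact U0_map_add Hs Ws Os hS (by simpa [List.mem_ofFn] using hsS)
      (Set.left_mem_Icc.2 h) (Set.right_mem_Icc.2 h)
  rw [negCount_add_const hS hsS, Lb_add_const B fun i j => hB _ (hsS i) _ (hsS j), hU]

/-- Shift invariance of the full propagator: if `Δt ≥ 0` and either `s_f + Δt < 0`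
or `s_i > 0`, then each term of the Dyson series is invariant under
`(s_i,s_f) ↦ (s_i+Δt, s_f+Δt)`; consequently `G(s_i+Δt, s_f+Δt) = G(s_i,s_f)`
for the truncated full propagator. Here the two-point correlation `B` depends only
on `|τ₁| − |τ₂|`. -/
theorem dyson_shift_invariance (Hs Ws Os : Matrix (Fin 2) (Fin 2) ℂ)
    (F : ℝ → ℂ) (B : ℝ → ℝ → ℂ) (hB : ∀ τ₁ τ₂, B τ₁ τ₂ = F (|τ₁| - |τ₂|))
    (Δt : ℝ) (hΔt : 0 ≤ Δt) (si sf : ℝ) (h : si ≤ sf)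
    (hside : sf + Δt < 0 ∨ 0 < si) (M : ℕ) :
    (∀ m : ℕ, dysonTerm Hs Ws Os B m (si + Δt) (sf + Δt) = dysonTerm Hs Ws Os B m si sf) ∧
    fullPropagator Hs Ws Os B M (si + Δt) (sf + Δt) = fullPropagator Hs Ws Os B M si sf := by
  have hS : StaysOnOneSide Δt (Set.Icc si sf) := .Icc_of_nonneg hΔt hside
  have hBshift : ∀ t ∈ Set.Icc si sf, ∀ u ∈ Set.Icc si sf, B (t + Δt) (u + Δt) = B t u :=
    fun t ht u hu => by rw [hB, hB, hS.abs_add_sub_abs_add ht hu]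
  have hterm m := dysonTerm_add_add Hs Ws Os B m h hS hBshift
  refine ⟨hterm, ?_⟩
  simp only [fullPropagator, hterm,
    Gs0_add_add Hs Os hS (Set.left_mem_Icc.2 h) (Set.right_mem_Icc.2 h)]
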